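/- arXiv:1612.02664 — 2 statements merged into one kernel-verified Lean document; each statement's English description precedes it below -/
import Mathlib

section
/- The sum over all primes p_n of (1/p_n) times the product over earlier primes p_k of (1 - 1/p_k) equals 1; that is, ∑_{n=1}^∞ (1/p_n) ∏_{k=1}^{n-1} (1 - 1/p_k) = 1. -/
/-!
Put `P N = ∏_{k < N} (1 - 1/p_k)`. The `n`-th summand is `P n - P (n + 1)`, so the partial sums
telescope to `1 - P N`. Since `1 - x ≤ exp (-x)`, `P N ≤ exp (-∑_{k < N} 1/p_k)`, which tends to `0`
because the sum of the reciprocals of the primes diverges.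
-/

open Finset Filter Topology

theorem Finset.sum_range_mul_prod_range_one_sub {R : Type*} [CommRing R] (a : ℕ → R) (N : ℕ) :
    ∑ n ∈ range N, a n * ∏ k ∈ range n, (1 - a k) = 1 - ∏ k ∈ range N, (1 - a k) := by
  induction N with
  | zero => simp
  | succ N ih => rw [sum_range_succ, ih, prod_range_succ]; ring

theorem Real.prod_one_sub_le_exp_neg_sum {ι : Type*} (s : Finset ι) {a : ι → ℝ}
    (ha : ∀ i ∈ s, a i ≤ 1) : ∏ i ∈ s, (1 - a i) ≤ Real.exp (-∑ i ∈ s, a i) := by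
  rw [← sum_neg_distrib, Real.exp_sum]
  exact prod_le_prod (fun i hi => sub_nonneg.mpr (ha i hi)) fun i _ => Real.one_sub_le_exp_neg _

section OneSub

variable {a : ℕ → ℝ}

theorem tendsto_prod_range_one_sub_of_not_summable (h0 : ∀ n, 0 ≤ a n) (h1 : ∀ n, a n ≤ 1)
    (ha : ¬Summable a) : Tendsto (fun N => ∏ k ∈ range N, (1 - a k)) atTop (𝓝 0) := by
  have hsum : Tendsto (fun N => ∑ k ∈ range N, a k) atTop atTop :=
    (not_summable_iff_tendsto_nat_atTop_of_nonneg h0).mp ha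
  exact squeeze_zero (fun N => prod_nonneg fun k _ => sub_nonneg.mpr (h1 k))
    (fun N => Real.prod_one_sub_le_exp_neg_sum _ fun k _ => h1 k)
    (Real.tendsto_exp_atBot.comp (tendsto_neg_atTop_atBot.comp hsum))

theorem hasSum_mul_prod_range_one_sub_of_not_summable (h0 : ∀ n, 0 ≤ a n) (h1 : ∀ n, a n ≤ 1)
    (ha : ¬Summable a) : HasSum (fun n => a n * ∏ k ∈ range n, (1 - a k)) 1 := by
  have hnonneg : ∀ n, 0 ≤ a n * ∏ k ∈ range n, (1 - a k) := fun n =>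
    mul_nonneg (h0 n) (prod_nonneg fun k _ => sub_nonneg.mpr (h1 k))
  rw [hasSum_iff_tendsto_nat_of_nonneg hnonneg]
  simp_rw [sum_range_mul_prod_range_one_sub]
  simpa using (tendsto_prod_range_one_sub_of_not_summable h0 h1 ha).const_sub (1 : ℝ)

end OneSub

theorem Nat.not_summable_one_div_nth_prime : ¬Summable fun n => 1 / (nth Prime n : ℝ) := by
  intro h
  have hcount := h.comp_injective (i := fun p : Nat.Primes => count Prime p)
    fun p q hpq => Subtype.ext (count_injective p.2 q.2 hpq)
  exact Nat.Primes.not_summable_one_div (hcount.congr fun p => by simp [nth_count p.2])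

theorem sifting_ratios_sum_to_one :
    ∑' n : ℕ, (1 / (Nat.nth Nat.Prime n : ℝ)) *
      ∏ k ∈ Finset.range n, (1 - 1 / (Nat.nth Nat.Prime k : ℝ)) = 1 := by
  have h1 : ∀ n, 1 / (Nat.nth Nat.Prime n : ℝ) ≤ 1 := fun n =>
    div_le_one_of_le₀ (mod_cast (Nat.prime_nth_prime n).one_lt.le) (by positivity)
  exact (hasSum_mul_prod_range_one_sub_of_not_summable (fun n => by positivity) h1
    Nat.not_summable_one_div_nth_prime).tsum_eq
end

section
/- For complex s with Re(s) < 1 and s ≠ 1, lim_{N→∞} N^{s-1} ∑_{n=1}^{N} n^{-s} = 1/(1-s). -/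
/-! With `σ = Re s`, the defect `(n + 1) ^ (-s) - ∫ x in n..n + 1, x ^ (-s)` is the integral of
`x ^ (-s) * (((n + 1) / x) ^ (-s) - 1)`, hence `o(∫ x in n..n + 1, x ^ (-σ))` since
`(n + 1) / x → 1` uniformly. As `σ < 1` these weights sum to `N ^ (1 - σ) / (1 - σ) → ∞`, so
the summed defects, `∑ n ∈ Icc 1 N, n ^ (-s) - N ^ (1 - s) / (1 - s)`, are `o(‖N ^ (1 - s)‖)`. -/

open Filter Topology Asymptotics Finset MeasureTheory

lemma eventually_norm_ofReal_cpow_sub_le (r : ℂ) {ε : ℝ} (hε : 0 < ε) :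
    ∀ᶠ n : ℕ in atTop, ∀ x ∈ Set.Icc (n : ℝ) (n + 1),
      ‖((n + 1 : ℝ) : ℂ) ^ r - (x : ℂ) ^ r‖ ≤ ε * x ^ r.re := by
  obtain ⟨δ, hδ, hcont⟩ := Metric.continuousAt_iff.1
    (Complex.continuousAt_ofReal_cpow_const 1 r (Or.inr one_ne_zero)) ε hε
  filter_upwards [eventually_ge_atTop 1,
    (tendsto_inv_atTop_zero.comp tendsto_natCast_atTop_atTop).eventually (gt_mem_nhds hδ)]
    with n hn hnδ x hx
  have hn1 : (1 : ℝ) ≤ n := by exact_mod_cast hn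
  have hx0 : 0 < x := by linarith [hx.1]
  -- the ratio `(n + 1) / x` lies in `[1, 1 + 1 / n]`, and `t ↦ t ^ r` is continuous at `1`
  have hratio : dist ((n + 1) / x) 1 < δ := by
    have hge : 1 ≤ (n + 1) / x := (one_le_div hx0).2 hx.2
    rw [Real.dist_eq, abs_of_nonneg (sub_nonneg.2 hge), div_sub_one hx0.ne']
    calc (n + 1 - x) / x ≤ 1 / n := by
          gcongr <;> linarith [hx.1, hx.2]
      _ < δ := by simpa using hnδ
  have hsplit : ((n + 1 : ℝ) : ℂ) ^ r = (x : ℂ) ^ r * (((n + 1) / x : ℝ) : ℂ) ^ r := by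
    rw [← Complex.mul_cpow_ofReal_nonneg hx0.le (by positivity), ← Complex.ofReal_mul,
      mul_div_cancel₀ _ hx0.ne']
  have hclose : ‖(((n + 1) / x : ℝ) : ℂ) ^ r - 1‖ ≤ ε := by
    simpa [dist_eq_norm] using (hcont hratio).le
  calc ‖((n + 1 : ℝ) : ℂ) ^ r - (x : ℂ) ^ r‖
      = x ^ r.re * ‖(((n + 1) / x : ℝ) : ℂ) ^ r - 1‖ := by
        rw [hsplit, ← mul_sub_one, norm_mul, Complex.norm_cpow_eq_rpow_re_of_pos hx0]
    _ ≤ ε * x ^ r.re := by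
        rw [mul_comm]; gcongr

lemma sum_integral_nat_adjacent_intervals {E : Type*} [NormedAddCommGroup E] [NormedSpace ℝ E]
    {f : ℝ → E} (N : ℕ) (hf : ∀ n < N, IntervalIntegrable f volume n (n + 1)) :
    ∑ n ∈ range N, ∫ x in (n : ℝ)..(n + 1), f x = ∫ x in (0 : ℝ)..N, f x := by
  simpa using intervalIntegral.sum_integral_adjacent_intervals (a := fun n : ℕ ↦ (n : ℝ))
    (fun n hn ↦ by simpa using hf n hn)

noncomputable def cpowIntegralError (s : ℂ) (n : ℕ) : ℂ :=
  ((n + 1 : ℝ) : ℂ) ^ (-s) - ∫ x in (n : ℝ)..(n + 1), (x : ℂ) ^ (-s)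

section

variable {s : ℂ}

lemma cpowIntegralError_eq_integral (hs : s.re < 1) (n : ℕ) :
    cpowIntegralError s n =
      ∫ x in (n : ℝ)..(n + 1), (((n + 1 : ℝ) : ℂ) ^ (-s) - (x : ℂ) ^ (-s)) := by
  rw [intervalIntegral.integral_sub intervalIntegrable_const
    (intervalIntegral.intervalIntegrable_cpow' (by simpa using hs)),
    intervalIntegral.integral_const, cpowIntegralError]
  simp

lemma isLittleO_cpowIntegralError (hs : s.re < 1) :
    cpowIntegralError s =o[atTop] fun n : ℕ ↦ ∫ x in (n : ℝ)..(n + 1), x ^ (-s.re) := by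
  have hint (n : ℕ) : IntervalIntegrable (fun x : ℝ ↦ x ^ (-s.re)) volume n (n + 1) :=
    intervalIntegral.intervalIntegrable_rpow' (by linarith)
  refine isLittleO_iff.2 fun ε hε ↦ ?_
  filter_upwards [eventually_norm_ofReal_cpow_sub_le (-s) hε] with n hn
  have hnonneg : 0 ≤ ∫ x in (n : ℝ)..(n + 1), x ^ (-s.re) :=
    intervalIntegral.integral_nonneg (by linarith) fun x hx ↦
      Real.rpow_nonneg (by linarith [hx.1]) _
  rw [cpowIntegralError_eq_integral hs, Real.norm_of_nonneg hnonneg,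
    ← intervalIntegral.integral_const_mul]
  refine intervalIntegral.norm_integral_le_of_norm_le (by linarith) (ae_of_all _ fun x hx ↦ ?_)
    ((hint n).const_mul ε)
  simpa using hn x (Set.Ioc_subset_Icc_self hx)

lemma sum_range_cpowIntegralError (hs : s.re < 1) (N : ℕ) :
    ∑ n ∈ range N, cpowIntegralError s n =
      ∑ n ∈ Icc 1 N, (n : ℂ) ^ (-s) - (N : ℂ) ^ (1 - s) / (1 - s) := by
  have hres : -1 < (-s).re := by simpa using hs
  have hsum : ∑ n ∈ range N, ((n + 1 : ℝ) : ℂ) ^ (-s) = ∑ n ∈ Icc 1 N, (n : ℂ) ^ (-s) := by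
    rw [← Ico_add_one_right_eq_Icc, sum_Ico_eq_sum_range]
    simp [add_comm]
  have hint : ∫ x in (0 : ℝ)..N, (x : ℂ) ^ (-s) = (N : ℂ) ^ (1 - s) / (1 - s) := by
    rw [integral_cpow (Or.inl hres), neg_add_eq_sub, Complex.ofReal_zero,
      Complex.zero_cpow (sub_ne_zero.2 fun h ↦ by simp [← h] at hs)]
    simp
  simp only [cpowIntegralError, sum_sub_distrib, hsum, hint,
    sum_integral_nat_adjacent_intervals N fun n _ ↦ intervalIntegral.intervalIntegrable_cpow' hres]

lemma sum_range_integral_rpow {σ : ℝ} (hσ : σ < 1) (N : ℕ) :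
    ∑ n ∈ range N, ∫ x in (n : ℝ)..(n + 1), x ^ (-σ) = (N : ℝ) ^ (1 - σ) / (1 - σ) := by
  rw [sum_integral_nat_adjacent_intervals N fun n _ ↦
    intervalIntegral.intervalIntegrable_rpow' (by linarith), integral_rpow (Or.inl (by linarith)),
    neg_add_eq_sub, Real.zero_rpow (by linarith), sub_zero]

lemma isLittleO_sum_cpow_sub (hs : s.re < 1) :
    (fun N : ℕ ↦ ∑ n ∈ Icc 1 N, (n : ℂ) ^ (-s) - (N : ℂ) ^ (1 - s) / (1 - s)) =o[atTop]
      fun N : ℕ ↦ (N : ℂ) ^ (1 - s) := by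
  have hσ : 0 < 1 - s.re := by linarith
  have hsum := (isLittleO_cpowIntegralError hs).sum_range
    (fun n ↦ intervalIntegral.integral_nonneg (by linarith) fun x hx ↦
      Real.rpow_nonneg (by linarith [hx.1]) _)
    (by simpa only [sum_range_integral_rpow hs, Function.comp_def] using
      ((tendsto_rpow_atTop hσ).comp tendsto_natCast_atTop_atTop).atTop_div_const hσ)
  simp only [sum_range_cpowIntegralError hs, sum_range_integral_rpow hs] at hsum
  refine hsum.trans_isBigO (IsBigO.of_bound (1 - s.re)⁻¹ ?_)
  filter_upwards [eventually_gt_atTop 0] with N hN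
  rw [Complex.norm_natCast_cpow_of_pos hN, Real.norm_of_nonneg (by positivity), div_eq_inv_mul]
  simp

end

theorem partial_sum_asymptotic_general (s : ℂ) (hs : s.re < 1) :
    Tendsto (fun N : ℕ => (N : ℂ) ^ (s - 1) * ∑ n ∈ Finset.Icc 1 N, (n : ℂ) ^ (-s))
      atTop (nhds (1 / (1 - s))) := by
  have h1s : 1 - s ≠ 0 := sub_ne_zero.2 fun h ↦ by simp [← h] at hs
  have hlim := (isLittleO_sum_cpow_sub hs).tendsto_div_nhds_zero.add_const (1 / (1 - s))
  rw [zero_add] at hlim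
  refine hlim.congr' ?_
  filter_upwards [eventually_ne_atTop 0] with N hN
  have hNs : (N : ℂ) ^ (1 - s) ≠ 0 := by simp [Complex.cpow_eq_zero_iff, hN]
  rw [← neg_sub 1 s, Complex.cpow_neg]
  field_simp
  ring

theorem partial_sum_asymptotic (s : ℂ) (hs : s.re < 1) (hs1 : s ≠ 1) :
    Tendsto (fun N : ℕ => (N : ℂ) ^ (s - 1) * ∑ n ∈ Finset.Icc 1 N, (n : ℂ) ^ (-s))
      atTop (nhds (1 / (1 - s))) :=
  partial_sum_asymptotic_general s hs
end
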